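/- Let n ≥ 2 be an integer, c > 0, and M ≥ 1. Let φ : ℝ → ℝ be twice continuously differentiable with 1 ≤ φ(x) ≤ M and |φ'(x)| ≤ M for all x, and with φ − 1 and φ' square-integrable. Let v : ℝ → ℝ be smooth with compact support. Then the function ε ↦ E[φ + ε v] is differentiable at ε = 0 with derivative ∫_ℝ ( c φ − φⁿ − c φⁿ (φⁿ φ')' − c + 1 ) v dx. In particular, if φ satisfies the solitary-wave equation −c φ + φⁿ + c φⁿ (φⁿ φ')' + c − 1 = 0 on ℝ, then this derivative is zero for every such v, i.e. φ is a critical point of E. -/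

import Mathlib

open MeasureTheory

/-- The energy functional `E = H + c N` for the magma equation with `n + m = 0`. -/
noncomputable def energy (n : ℕ) (c : ℝ) (ψ : ℝ → ℝ) : ℝ :=
  (∫ x : ℝ, ((1 - ψ x ^ (n + 1)) / (n + 1) + (ψ x - 1)))
    + c * ∫ x : ℝ, ((1 / 2) * ψ x ^ (2 * n) * (deriv ψ x) ^ 2 + (1 / 2) * (ψ x - 1) ^ 2)

/-- Quantitative second-order Taylor bound for `t ^ N` at `t = 1`, for `1 ≤ t ≤ M`. -/
lemma aux_pow_taylor (N : ℕ) (M t : ℝ) (hM : 1 ≤ M) (h1 : 1 ≤ t) (htM : t ≤ M) :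
    0 ≤ t ^ N - 1 - N * (t - 1) ∧
      t ^ N - 1 - N * (t - 1) ≤ (N : ℝ) ^ 2 * M ^ N * (t - 1) ^ 2 := by
  have ht0 : (0:ℝ) ≤ t - 1 := by linarith
  constructor
  · have h := one_add_mul_le_pow (a := t - 1) (by linarith) N
    have h2 : (1 + (t - 1)) ^ N = t ^ N := by ring_nf
    nlinarith [h]
  · have key : ∀ i, i ≤ N → t ^ i - 1 ≤ (N : ℝ) * M ^ N * (t - 1) := by
      intro i hi
      have hg := geom_sum_mul t i
      have hsum : (∑ j ∈ Finset.range i, t ^ j) ≤ (i : ℝ) * M ^ N := by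
        calc (∑ j ∈ Finset.range i, t ^ j) ≤ ∑ _j ∈ Finset.range i, M ^ N := by
              apply Finset.sum_le_sum
              intro j hj
              calc t ^ j ≤ M ^ j := pow_le_pow_left₀ (by linarith) htM j
                _ ≤ M ^ N := pow_le_pow_right₀ hM
                    (by have := Finset.mem_range.mp hj; omega)
          _ = (i : ℝ) * M ^ N := by
              simp [Finset.sum_const, Finset.card_range, nsmul_eq_mul]
      have hMN : (0:ℝ) ≤ M ^ N := by positivity
      have hiN : (i:ℝ) ≤ (N:ℝ) := Nat.cast_le.mpr hi
      have hnonneg : (0:ℝ) ≤ ∑ j ∈ Finset.range i, t ^ j :=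
        Finset.sum_nonneg fun j _ => by positivity
      rw [← hg]
      have hA := mul_le_mul_of_nonneg_right hsum ht0
      have hB := mul_le_mul_of_nonneg_right
        (mul_le_mul_of_nonneg_right hiN hMN) ht0
      linarith
    have hg := geom_sum_mul t N
    have hS : (∑ i ∈ Finset.range N, t ^ i) - N ≤ (N:ℝ) * ((N:ℝ) * M ^ N * (t-1)) := by
      have hrw : (∑ i ∈ Finset.range N, t ^ i) - (N:ℝ)
          = ∑ i ∈ Finset.range N, (t ^ i - 1) := by
        rw [Finset.sum_sub_distrib]; simp
      rw [hrw]
      calc ∑ i ∈ Finset.range N, (t ^ i - 1)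
          ≤ ∑ _i ∈ Finset.range N, (N:ℝ) * M ^ N * (t-1) :=
            Finset.sum_le_sum fun i hi => key i (le_of_lt (Finset.mem_range.mp hi))
        _ = (N:ℝ) * ((N:ℝ) * M ^ N * (t-1)) := by
            simp [Finset.sum_const, Finset.card_range, nsmul_eq_mul]
    have hmain : t ^ N - 1 - N * (t-1)
        = ((∑ i ∈ Finset.range N, t ^ i) - N) * (t - 1) := by
      rw [← hg]; ring
    rw [hmain]
    calc ((∑ i ∈ Finset.range N, t ^ i) - (N:ℝ)) * (t - 1)
        ≤ ((N:ℝ) * ((N:ℝ) * M ^ N * (t-1))) * (t - 1) :=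
          mul_le_mul_of_nonneg_right hS ht0
      _ = (N : ℝ) ^ 2 * M ^ N * (t - 1) ^ 2 := by ring

/-- for smooth compactly supported `v`, `ε ↦ E[φ + ε v]` is differentiable
at `ε = 0` with derivative `∫ (c φ - φⁿ - c φⁿ (φⁿ φ')' - c + 1) v`; in particular a
solution of the solitary-wave equation is a critical point of `E`. -/
theorem stmt_12 (n : ℕ) (hn : 2 ≤ n) (c : ℝ) (hc : 0 < c) (M : ℝ) (hM : 1 ≤ M)
    (φ : ℝ → ℝ) (hreg : ContDiff ℝ 2 φ)
    (hφ1 : ∀ x, 1 ≤ φ x) (hφM : ∀ x, φ x ≤ M) (hφ' : ∀ x, |deriv φ x| ≤ M)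
    (hint1 : Integrable (fun x => (φ x - 1) ^ 2))
    (hint2 : Integrable (fun x => (deriv φ x) ^ 2))
    (v : ℝ → ℝ) (hv : ContDiff ℝ (⊤ : ℕ∞) v) (hvsupp : HasCompactSupport v) :
    HasDerivAt (fun ε : ℝ => energy n c (fun x => φ x + ε * v x))
      (∫ x : ℝ, (c * φ x - φ x ^ n
        - c * φ x ^ n * deriv (fun y => φ y ^ n * deriv φ y) x - c + 1) * v x) 0 ∧
    ((∀ x, -c * φ x + φ x ^ n
        + c * φ x ^ n * deriv (fun y => φ y ^ n * deriv φ y) x + c - 1 = 0) →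
      (∫ x : ℝ, (c * φ x - φ x ^ n
        - c * φ x ^ n * deriv (fun y => φ y ^ n * deriv φ y) x - c + 1) * v x) = 0) := by
  obtain ⟨k, rfl⟩ : ∃ k, n = k + 2 := ⟨n - 2, by omega⟩
  -- basic regularity facts
  have hφd : Differentiable ℝ φ := hreg.differentiable two_ne_zero
  have hφc : Continuous φ := hφd.continuous
  have hreg1 : ContDiff ℝ 1 (deriv φ) := by
    have h2 : ContDiff ℝ (1 + 1 : ℕ) φ := by exact_mod_cast hreg
    exact (contDiff_succ_iff_deriv.mp (by exact_mod_cast h2)).2.2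
  have hφ'd : Differentiable ℝ (deriv φ) := hreg1.differentiable one_ne_zero
  have hφ'c : Continuous (deriv φ) := hφ'd.continuous
  have hφ''c : Continuous (deriv (deriv φ)) := hreg1.continuous_deriv le_rfl
  have hvd : Differentiable ℝ v := hv.differentiable (by simp)
  have hvc : Continuous v := hvd.continuous
  have hv'c : Continuous (deriv v) := hv.continuous_deriv (by simp)
  have hv'supp : HasCompactSupport (deriv v) := hvsupp.deriv
  obtain ⟨Cv, hCv⟩ := hvsupp.exists_bound_of_continuous hvc
  obtain ⟨Cw, hCw⟩ := hv'supp.exists_bound_of_continuous hv'c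
  have hCvabs : ∀ x, |v x| ≤ Cv := fun x => by simpa [Real.norm_eq_abs] using hCv x
  have hCwabs : ∀ x, |deriv v x| ≤ Cw := fun x => by simpa [Real.norm_eq_abs] using hCw x
  have hCv0 : 0 ≤ Cv := le_trans (abs_nonneg _) (hCvabs 0)
  have hCw0 : 0 ≤ Cw := le_trans (abs_nonneg _) (hCwabs 0)
  have hφabs : ∀ x, |φ x| ≤ M := fun x => abs_le.mpr ⟨by linarith [hφ1 x], hφM x⟩
  have hPbound : ∀ (ε x : ℝ), |ε| ≤ 1 → |φ x + ε * v x| ≤ M + Cv := by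
    intro ε x hε
    calc |φ x + ε * v x| ≤ |φ x| + |ε * v x| := abs_add_le _ _
      _ ≤ M + Cv := by
          rw [abs_mul]
          have h1 := hφabs x
          have h2 := hCvabs x
          nlinarith [abs_nonneg (v x), abs_nonneg ε]
  have hQbound : ∀ (ε x : ℝ), |ε| ≤ 1 → |deriv φ x + ε * deriv v x| ≤ M + Cw := by
    intro ε x hε
    calc |deriv φ x + ε * deriv v x| ≤ |deriv φ x| + |ε * deriv v x| := abs_add_le _ _
      _ ≤ M + Cw := by
          rw [abs_mul]
          have h1 := hφ' x
          have h2 := hCwabs x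
          nlinarith [abs_nonneg (deriv v x), abs_nonneg ε]
  have hvzero : ∀ x, x ∉ tsupport v → v x = 0 := fun x hx =>
    image_eq_zero_of_notMem_tsupport hx
  have hv'zero : ∀ x, x ∉ tsupport v → deriv v x = 0 := by
    intro x hx
    by_contra h
    exact hx (support_deriv_subset (by simpa [Function.mem_support] using h))
  have hKmeas : MeasurableSet (tsupport v) := (isClosed_tsupport v).measurableSet
  have hKfin : volume (tsupport v) < ⊤ := hvsupp.measure_lt_top
  have hboundInt : ∀ B : ℝ, Integrable ((tsupport v).indicator (fun _ => B)) := by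
    intro B
    rw [integrable_indicator_iff hKmeas]
    exact integrableOn_const hKfin.ne
  -- derivative of the perturbed function
  have hψderiv : ∀ (ε x : ℝ),
      deriv (fun y => φ y + ε * v y) x = deriv φ x + ε * deriv v x := by
    intro ε x
    exact (((hφd x).hasDerivAt).add (((hvd x).hasDerivAt).const_mul ε)).deriv
  have hb : ∀ (ε x : ℝ), HasDerivAt (fun ε : ℝ => φ x + ε * v x) (v x) ε := by
    intro ε x
    exact (hasDerivAt_mul_const (v x)).const_add (φ x)
  have hb2 : ∀ (ε x : ℝ),
      HasDerivAt (fun ε : ℝ => deriv φ x + ε * deriv v x) (deriv v x) ε := by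
    intro ε x
    exact (hasDerivAt_mul_const (deriv v x)).const_add (deriv φ x)
  -- first parametric integral
  have key1 := hasDerivAt_integral_of_dominated_loc_of_deriv_le (μ := volume) (x₀ := (0:ℝ))
    (s := Metric.ball 0 1)
    (F := fun ε x => (1 - (φ x + ε * v x) ^ (k + 3)) / ((k : ℝ) + 3) + ((φ x + ε * v x) - 1))
    (F' := fun ε x => v x - (φ x + ε * v x) ^ (k + 2) * v x)
    (bound := (tsupport v).indicator (fun _ => Cv + (M + Cv) ^ (k + 2) * Cv))
    (Metric.ball_mem_nhds 0 one_pos)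
    (Filter.Eventually.of_forall fun ε => Continuous.aestronglyMeasurable (by fun_prop))
    (by -- integrability at 0
      apply Integrable.mono' (hint1.const_mul (((k:ℝ) + 3) * M ^ (k + 3)))
        (Continuous.aestronglyMeasurable (by fun_prop))
      refine Filter.Eventually.of_forall fun x => ?_
      show ‖(1 - (φ x + 0 * v x) ^ (k + 3)) / ((k : ℝ) + 3) + ((φ x + 0 * v x) - 1)‖
        ≤ ((k:ℝ) + 3) * M ^ (k + 3) * (φ x - 1) ^ 2
      have h1 := hφ1 x
      have h2 := hφM x
      obtain ⟨hl, hu⟩ := aux_pow_taylor (k + 3) M (φ x) hM h1 h2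
      have hk3 : (0:ℝ) < (k:ℝ) + 3 := by positivity
      have heq : (1 - (φ x + 0 * v x) ^ (k + 3)) / ((k : ℝ) + 3) + ((φ x + 0 * v x) - 1)
          = -((φ x ^ (k + 3) - 1 - (k + 3) * (φ x - 1)) / ((k:ℝ) + 3)) := by
        push_cast
        field_simp
        ring
      rw [Real.norm_eq_abs, heq, abs_neg,
        abs_of_nonneg (div_nonneg (by push_cast at hl ⊢; linarith) (le_of_lt hk3)),
        div_le_iff₀ hk3]
      have : ((k:ℝ) + 3) ^ 2 * M ^ (k + 3) * (φ x - 1) ^ 2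
          = ((k:ℝ) + 3) * M ^ (k + 3) * (φ x - 1) ^ 2 * ((k:ℝ) + 3) := by ring
      push_cast at hu ⊢
      linarith)
    (Continuous.aestronglyMeasurable (by fun_prop))
    (by -- bound
      refine Filter.Eventually.of_forall fun x => ?_
      intro ε hε
      have hε1 : |ε| ≤ 1 := by
        have := Metric.mem_ball.mp hε
        rw [Real.dist_eq, sub_zero] at this
        linarith
      show ‖v x - (φ x + ε * v x) ^ (k + 2) * v x‖
        ≤ (tsupport v).indicator (fun _ => Cv + (M + Cv) ^ (k + 2) * Cv) x
      by_cases hx : x ∈ tsupport v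
      · rw [Set.indicator_of_mem hx]
        have h1 : |φ x + ε * v x| ^ (k + 2) ≤ (M + Cv) ^ (k + 2) :=
          pow_le_pow_left₀ (abs_nonneg _) (hPbound ε x hε1) _
        have h2 := hCvabs x
        rw [Real.norm_eq_abs]
        calc |v x - (φ x + ε * v x) ^ (k + 2) * v x|
            ≤ |v x| + |(φ x + ε * v x) ^ (k + 2) * v x| := by
              rw [sub_eq_add_neg]
              exact (abs_add_le _ _).trans_eq (by rw [abs_neg])
          _ ≤ Cv + (M + Cv) ^ (k + 2) * Cv := by
              rw [abs_mul, abs_pow]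
              have := mul_le_mul h1 h2 (abs_nonneg _) (by positivity)
              linarith
      · rw [Set.indicator_of_notMem hx]
        simp [hvzero x hx])
    (hboundInt _)
    (by -- differentiability in ε
      refine Filter.Eventually.of_forall fun x => ?_
      intro ε _
      show HasDerivAt (fun ε : ℝ => (1 - (φ x + ε * v x) ^ (k + 3)) / ((k : ℝ) + 3)
        + ((φ x + ε * v x) - 1)) (v x - (φ x + ε * v x) ^ (k + 2) * v x) ε
      have H := (((hasDerivAt_const ε (1:ℝ)).fun_sub ((hb ε x).fun_pow (k + 3))).div_const
        ((k : ℝ) + 3)).fun_add ((hb ε x).sub_const 1)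
      rw [show k + 3 - 1 = k + 2 from by omega] at H
      refine H.congr_deriv ?_
      have hk3 : ((k:ℝ) + 3) ≠ 0 := by positivity
      push_cast
      field_simp
      ring)
  -- second parametric integral
  have key2 := hasDerivAt_integral_of_dominated_loc_of_deriv_le (μ := volume) (x₀ := (0:ℝ))
    (s := Metric.ball 0 1)
    (F := fun ε x => (1/2) * (φ x + ε * v x) ^ (2*k + 4) * (deriv φ x + ε * deriv v x) ^ 2
      + (1/2) * ((φ x + ε * v x) - 1) ^ 2)
    (F' := fun ε x => ((k:ℝ) + 2) * (φ x + ε * v x) ^ (2*k + 3)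
        * (deriv φ x + ε * deriv v x) ^ 2 * v x
      + (φ x + ε * v x) ^ (2*k + 4) * (deriv φ x + ε * deriv v x) * deriv v x
      + ((φ x + ε * v x) - 1) * v x)
    (bound := (tsupport v).indicator (fun _ =>
      ((k:ℝ) + 2) * (M + Cv) ^ (2*k + 3) * (M + Cw) ^ 2 * Cv
        + (M + Cv) ^ (2*k + 4) * (M + Cw) * Cw + (M + Cv + 1) * Cv))
    (Metric.ball_mem_nhds 0 one_pos)
    (Filter.Eventually.of_forall fun ε => Continuous.aestronglyMeasurable (by fun_prop))
    (by -- integrability at 0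
      apply Integrable.mono'
        ((hint2.const_mul ((1/2) * M ^ (2*k + 4))).add (hint1.const_mul (1/2)))
      · exact Continuous.aestronglyMeasurable (by fun_prop)
      refine Filter.Eventually.of_forall fun x => ?_
      show ‖(1/2) * (φ x + 0 * v x) ^ (2*k + 4) * (deriv φ x + 0 * deriv v x) ^ 2
          + (1/2) * ((φ x + 0 * v x) - 1) ^ 2‖
        ≤ (1/2) * M ^ (2*k + 4) * (deriv φ x) ^ 2 + (1/2) * (φ x - 1) ^ 2
      simp only [zero_mul, add_zero]
      have h1 := hφ1 x
      have h2 := hφM x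
      have h0 : (0:ℝ) ≤ φ x := by linarith
      have hpow : φ x ^ (2*k + 4) ≤ M ^ (2*k + 4) := pow_le_pow_left₀ h0 h2 _
      have habs : (0:ℝ) ≤ (1/2) * φ x ^ (2*k + 4) * (deriv φ x) ^ 2
          + (1/2) * (φ x - 1) ^ 2 :=
        add_nonneg (mul_nonneg (mul_nonneg (by norm_num) (pow_nonneg h0 _)) (sq_nonneg _))
          (mul_nonneg (by norm_num) (sq_nonneg _))
      rw [Real.norm_eq_abs, abs_of_nonneg habs]
      nlinarith [sq_nonneg (deriv φ x), sq_nonneg (φ x - 1),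
        mul_nonneg (sub_nonneg.mpr hpow) (sq_nonneg (deriv φ x))])
    (Continuous.aestronglyMeasurable (by fun_prop))
    (by -- bound
      refine Filter.Eventually.of_forall fun x => ?_
      intro ε hε
      have hε1 : |ε| ≤ 1 := by
        have := Metric.mem_ball.mp hε
        rw [Real.dist_eq, sub_zero] at this
        linarith
      show ‖((k:ℝ) + 2) * (φ x + ε * v x) ^ (2*k + 3)
            * (deriv φ x + ε * deriv v x) ^ 2 * v x
          + (φ x + ε * v x) ^ (2*k + 4) * (deriv φ x + ε * deriv v x) * deriv v x
          + ((φ x + ε * v x) - 1) * v x‖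
        ≤ (tsupport v).indicator (fun _ =>
            ((k:ℝ) + 2) * (M + Cv) ^ (2*k + 3) * (M + Cw) ^ 2 * Cv
              + (M + Cv) ^ (2*k + 4) * (M + Cw) * Cw + (M + Cv + 1) * Cv) x
      by_cases hx : x ∈ tsupport v
      · rw [Set.indicator_of_mem hx]
        have hP := hPbound ε x hε1
        have hQ := hQbound ε x hε1
        have h3 := hCvabs x
        have h4 := hCwabs x
        rw [Real.norm_eq_abs]
        have e1 : |((k:ℝ) + 2) * (φ x + ε * v x) ^ (2*k + 3)
            * (deriv φ x + ε * deriv v x) ^ 2 * v x|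
            ≤ ((k:ℝ) + 2) * (M + Cv) ^ (2*k + 3) * (M + Cw) ^ 2 * Cv := by
          rw [abs_mul, abs_mul, abs_mul, abs_pow, abs_pow,
            abs_of_nonneg (by positivity : (0:ℝ) ≤ (k:ℝ) + 2)]
          gcongr <;> first | exact abs_nonneg _ | exact hP | exact hQ | exact h3 | positivity
        have e2 : |(φ x + ε * v x) ^ (2*k + 4) * (deriv φ x + ε * deriv v x) * deriv v x|
            ≤ (M + Cv) ^ (2*k + 4) * (M + Cw) * Cw := by
          rw [abs_mul, abs_mul, abs_pow]
          gcongr <;> first | exact abs_nonneg _ | exact hP | exact hQ | exact h4 | positivity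
        have e3 : |((φ x + ε * v x) - 1) * v x| ≤ (M + Cv + 1) * Cv := by
          rw [abs_mul]
          have : |(φ x + ε * v x) - 1| ≤ M + Cv + 1 := by
            calc |(φ x + ε * v x) - 1| ≤ |φ x + ε * v x| + |(1:ℝ)| := by
                  rw [sub_eq_add_neg]
                  exact (abs_add_le _ _).trans_eq (by rw [abs_neg])
              _ ≤ M + Cv + 1 := by rw [abs_one]; linarith
          exact mul_le_mul this h3 (abs_nonneg _) (by positivity)
        refine le_trans (abs_add_le _ _) ?_
        refine le_trans (add_le_add_left (abs_add_le _ _) _) ?_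
        linarith
      · rw [Set.indicator_of_notMem hx]
        simp [hvzero x hx, hv'zero x hx])
    (hboundInt _)
    (by -- differentiability in ε
      refine Filter.Eventually.of_forall fun x => ?_
      intro ε _
      show HasDerivAt (fun ε : ℝ => (1/2) * (φ x + ε * v x) ^ (2*k + 4)
          * (deriv φ x + ε * deriv v x) ^ 2 + (1/2) * ((φ x + ε * v x) - 1) ^ 2)
        (((k:ℝ) + 2) * (φ x + ε * v x) ^ (2*k + 3)
            * (deriv φ x + ε * deriv v x) ^ 2 * v x
          + (φ x + ε * v x) ^ (2*k + 4) * (deriv φ x + ε * deriv v x) * deriv v x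
          + ((φ x + ε * v x) - 1) * v x) ε
      have H := ((((hb ε x).fun_pow (2*k + 4)).const_mul (1/2 : ℝ)).fun_mul
        ((hb2 ε x).fun_pow 2)).fun_add ((((hb ε x).sub_const 1).fun_pow 2).const_mul (1/2 : ℝ))
      rw [show 2*k + 4 - 1 = 2*k + 3 from by omega] at H
      convert H using 1
      push_cast
      ring)
  -- rewrite the energy as the two parametric integrals
  have hfun : (fun ε : ℝ => energy (k + 2) c (fun x => φ x + ε * v x))
      = fun ε : ℝ => (∫ x : ℝ, ((1 - (φ x + ε * v x) ^ (k + 3)) / ((k : ℝ) + 3)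
          + ((φ x + ε * v x) - 1)))
        + c * ∫ x : ℝ, ((1/2) * (φ x + ε * v x) ^ (2*k + 4)
          * (deriv φ x + ε * deriv v x) ^ 2 + (1/2) * ((φ x + ε * v x) - 1) ^ 2) := by
    funext ε
    simp only [energy]
    congr 1
    · congr 1
      funext x
      push_cast
      ring
    · congr 1
      congr 1
      funext x
      rw [hψderiv ε x]
      push_cast
      ring
  -- the second derivative of φ-related function
  have hD : ∀ x, deriv (fun y => φ y ^ (k + 2) * deriv φ y) x
      = ((k:ℝ) + 2) * φ x ^ (k + 1) * deriv φ x * deriv φ x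
        + φ x ^ (k + 2) * deriv (deriv φ) x := by
    intro x
    have H := (((hφd x).hasDerivAt.fun_pow (k + 2)).fun_mul ((hφ'd x).hasDerivAt)).deriv
    rw [show k + 2 - 1 = k + 1 from by omega] at H
    rw [H]
    push_cast
    ring
  -- integration by parts
  have hu : ∀ x, HasDerivAt (fun y => φ y ^ (2*k + 4) * deriv φ y)
      ((2*(k:ℝ) + 4) * φ x ^ (2*k + 3) * deriv φ x * deriv φ x
        + φ x ^ (2*k + 4) * deriv (deriv φ) x) x := by
    intro x
    have H := (((hφd x).hasDerivAt.fun_pow (2*k + 4)).fun_mul ((hφ'd x).hasDerivAt))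
    rw [show 2*k + 4 - 1 = 2*k + 3 from by omega] at H
    refine H.congr_deriv ?_
    push_cast
    ring
  have hcu : Continuous (fun x => φ x ^ (2*k + 4) * deriv φ x) := by fun_prop
  have hcu' : Continuous (fun x => (2*(k:ℝ) + 4) * φ x ^ (2*k + 3) * deriv φ x * deriv φ x
      + φ x ^ (2*k + 4) * deriv (deriv φ) x) := by fun_prop
  have hIBP : (∫ x : ℝ, (φ x ^ (2*k + 4) * deriv φ x) * deriv v x)
      = - ∫ x : ℝ, ((2*(k:ℝ) + 4) * φ x ^ (2*k + 3) * deriv φ x * deriv φ x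
          + φ x ^ (2*k + 4) * deriv (deriv φ) x) * v x := by
    exact integral_mul_deriv_eq_deriv_mul_of_integrable (fun x _ => hu x) (fun x _ => (hvd x).hasDerivAt)
      ((hcu.mul hv'c).integrable_of_hasCompactSupport hv'supp.mul_left)
      ((hcu'.mul hvc).integrable_of_hasCompactSupport hvsupp.mul_left)
      ((hcu.mul hvc).integrable_of_hasCompactSupport hvsupp.mul_left)
  -- integrability of the pieces
  have hi1 : Integrable (fun x => ((k:ℝ) + 2) * φ x ^ (2*k + 3) * (deriv φ x) ^ 2 * v x) :=
    Continuous.integrable_of_hasCompactSupport (by fun_prop) hvsupp.mul_left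
  have hi2 : Integrable (fun x => (φ x ^ (2*k + 4) * deriv φ x) * deriv v x) :=
    Continuous.integrable_of_hasCompactSupport (by fun_prop) hv'supp.mul_left
  have hi3 : Integrable (fun x => (φ x - 1) * v x) :=
    Continuous.integrable_of_hasCompactSupport (by fun_prop) hvsupp.mul_left
  have hi4 : Integrable (fun x => ((2*(k:ℝ) + 4) * φ x ^ (2*k + 3) * deriv φ x * deriv φ x
      + φ x ^ (2*k + 4) * deriv (deriv φ) x) * v x) :=
    Continuous.integrable_of_hasCompactSupport (by fun_prop) hvsupp.mul_left
  have hia : Integrable (fun x => (1 - φ x ^ (k + 2)) * v x) :=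
    Continuous.integrable_of_hasCompactSupport (by fun_prop) hvsupp.mul_left
  -- simplify the two derivative integrals
  have hA : (∫ x : ℝ, (v x - (φ x + 0 * v x) ^ (k + 2) * v x))
      = ∫ x : ℝ, (1 - φ x ^ (k + 2)) * v x := by
    congr 1
    funext x
    rw [zero_mul, add_zero]
    ring
  have hB : (∫ x : ℝ, (((k:ℝ) + 2) * (φ x + 0 * v x) ^ (2*k + 3)
        * (deriv φ x + 0 * deriv v x) ^ 2 * v x
      + (φ x + 0 * v x) ^ (2*k + 4) * (deriv φ x + 0 * deriv v x) * deriv v x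
      + ((φ x + 0 * v x) - 1) * v x))
      = (∫ x : ℝ, ((k:ℝ) + 2) * φ x ^ (2*k + 3) * (deriv φ x) ^ 2 * v x)
        + (∫ x : ℝ, (φ x ^ (2*k + 4) * deriv φ x) * deriv v x)
        + ∫ x : ℝ, (φ x - 1) * v x := by
    calc (∫ x : ℝ, (((k:ℝ) + 2) * (φ x + 0 * v x) ^ (2*k + 3)
          * (deriv φ x + 0 * deriv v x) ^ 2 * v x
        + (φ x + 0 * v x) ^ (2*k + 4) * (deriv φ x + 0 * deriv v x) * deriv v x
        + ((φ x + 0 * v x) - 1) * v x))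
        = ∫ x : ℝ, (((k:ℝ) + 2) * φ x ^ (2*k + 3) * (deriv φ x) ^ 2 * v x
            + (φ x ^ (2*k + 4) * deriv φ x) * deriv v x
            + (φ x - 1) * v x) := by
          congr 1
          funext x
          simp only [zero_mul, add_zero]
          try ring
      _ = (∫ x : ℝ, (((k:ℝ) + 2) * φ x ^ (2*k + 3) * (deriv φ x) ^ 2 * v x
            + (φ x ^ (2*k + 4) * deriv φ x) * deriv v x))
          + ∫ x : ℝ, (φ x - 1) * v x := integral_add (hi1.add hi2) hi3
      _ = (∫ x : ℝ, ((k:ℝ) + 2) * φ x ^ (2*k + 3) * (deriv φ x) ^ 2 * v x)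
          + (∫ x : ℝ, (φ x ^ (2*k + 4) * deriv φ x) * deriv v x)
          + ∫ x : ℝ, (φ x - 1) * v x := by rw [integral_add hi1 hi2]
  -- the main value identity
  have hval : (∫ x : ℝ, (c * φ x - φ x ^ (k + 2)
        - c * φ x ^ (k + 2) * deriv (fun y => φ y ^ (k + 2) * deriv φ y) x - c + 1) * v x)
      = (∫ x : ℝ, (1 - φ x ^ (k + 2)) * v x)
        + c * ((∫ x : ℝ, ((k:ℝ) + 2) * φ x ^ (2*k + 3) * (deriv φ x) ^ 2 * v x)
          + (∫ x : ℝ, (φ x ^ (2*k + 4) * deriv φ x) * deriv v x)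
          + ∫ x : ℝ, (φ x - 1) * v x) := by
    rw [hIBP]
    have hcomb : (∫ x : ℝ, (c * φ x - φ x ^ (k + 2)
          - c * φ x ^ (k + 2) * deriv (fun y => φ y ^ (k + 2) * deriv φ y) x - c + 1) * v x)
        = ∫ x : ℝ, ((1 - φ x ^ (k + 2)) * v x
            + (c * (((k:ℝ) + 2) * φ x ^ (2*k + 3) * (deriv φ x) ^ 2 * v x)
              - c * (((2*(k:ℝ) + 4) * φ x ^ (2*k + 3) * deriv φ x * deriv φ x
                + φ x ^ (2*k + 4) * deriv (deriv φ) x) * v x)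
              + c * ((φ x - 1) * v x))) := by
      congr 1
      funext x
      rw [hD x]
      ring
    rw [hcomb]
    have e1 : (∫ x : ℝ, ((1 - φ x ^ (k + 2)) * v x
          + (c * (((k:ℝ) + 2) * φ x ^ (2*k + 3) * (deriv φ x) ^ 2 * v x)
            - c * (((2*(k:ℝ) + 4) * φ x ^ (2*k + 3) * deriv φ x * deriv φ x
              + φ x ^ (2*k + 4) * deriv (deriv φ) x) * v x)
            + c * ((φ x - 1) * v x))))
        = (∫ x : ℝ, (1 - φ x ^ (k + 2)) * v x)
          + ∫ x : ℝ, (c * (((k:ℝ) + 2) * φ x ^ (2*k + 3) * (deriv φ x) ^ 2 * v x)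
            - c * (((2*(k:ℝ) + 4) * φ x ^ (2*k + 3) * deriv φ x * deriv φ x
              + φ x ^ (2*k + 4) * deriv (deriv φ) x) * v x)
            + c * ((φ x - 1) * v x)) :=
      integral_add hia (((hi1.const_mul c).sub (hi4.const_mul c)).add (hi3.const_mul c))
    have e2 : (∫ x : ℝ, (c * (((k:ℝ) + 2) * φ x ^ (2*k + 3) * (deriv φ x) ^ 2 * v x)
          - c * (((2*(k:ℝ) + 4) * φ x ^ (2*k + 3) * deriv φ x * deriv φ x
            + φ x ^ (2*k + 4) * deriv (deriv φ) x) * v x)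
          + c * ((φ x - 1) * v x)))
        = (∫ x : ℝ, (c * (((k:ℝ) + 2) * φ x ^ (2*k + 3) * (deriv φ x) ^ 2 * v x)
            - c * (((2*(k:ℝ) + 4) * φ x ^ (2*k + 3) * deriv φ x * deriv φ x
              + φ x ^ (2*k + 4) * deriv (deriv φ) x) * v x)))
          + ∫ x : ℝ, c * ((φ x - 1) * v x) :=
      integral_add ((hi1.const_mul c).sub (hi4.const_mul c)) (hi3.const_mul c)
    have e3 : (∫ x : ℝ, (c * (((k:ℝ) + 2) * φ x ^ (2*k + 3) * (deriv φ x) ^ 2 * v x)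
          - c * (((2*(k:ℝ) + 4) * φ x ^ (2*k + 3) * deriv φ x * deriv φ x
            + φ x ^ (2*k + 4) * deriv (deriv φ) x) * v x)))
        = (∫ x : ℝ, c * (((k:ℝ) + 2) * φ x ^ (2*k + 3) * (deriv φ x) ^ 2 * v x))
          - ∫ x : ℝ, c * (((2*(k:ℝ) + 4) * φ x ^ (2*k + 3) * deriv φ x * deriv φ x
            + φ x ^ (2*k + 4) * deriv (deriv φ) x) * v x) :=
      integral_sub (hi1.const_mul c) (hi4.const_mul c)
    have e4 : (∫ x : ℝ, c * (((k:ℝ) + 2) * φ x ^ (2*k + 3) * (deriv φ x) ^ 2 * v x))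
        = c * ∫ x : ℝ, ((k:ℝ) + 2) * φ x ^ (2*k + 3) * (deriv φ x) ^ 2 * v x :=
      integral_const_mul c _
    have e5 : (∫ x : ℝ, c * (((2*(k:ℝ) + 4) * φ x ^ (2*k + 3) * deriv φ x * deriv φ x
          + φ x ^ (2*k + 4) * deriv (deriv φ) x) * v x))
        = c * ∫ x : ℝ, ((2*(k:ℝ) + 4) * φ x ^ (2*k + 3) * deriv φ x * deriv φ x
          + φ x ^ (2*k + 4) * deriv (deriv φ) x) * v x :=
      integral_const_mul c _
    have e6 : (∫ x : ℝ, c * ((φ x - 1) * v x)) = c * ∫ x : ℝ, (φ x - 1) * v x :=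
      integral_const_mul c _
    rw [e1, e2, e3, e4, e5, e6]
    ring
  constructor
  · rw [hfun]
    have H := key1.2.add (key2.2.const_mul c)
    rw [hval, ← hA, ← hB]
    exact H
  · intro hsol
    have hz : ∀ x : ℝ, (c * φ x - φ x ^ (k + 2)
        - c * φ x ^ (k + 2) * deriv (fun y => φ y ^ (k + 2) * deriv φ y) x - c + 1) * v x
        = 0 := by
      intro x
      have := hsol x
      have h0 : c * φ x - φ x ^ (k + 2)
          - c * φ x ^ (k + 2) * deriv (fun y => φ y ^ (k + 2) * deriv φ y) x - c + 1 = 0 := by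
        linarith
      rw [h0, zero_mul]
    calc (∫ x : ℝ, (c * φ x - φ x ^ (k + 2)
          - c * φ x ^ (k + 2) * deriv (fun y => φ y ^ (k + 2) * deriv φ y) x - c + 1) * v x)
        = ∫ _x : ℝ, (0:ℝ) := by
          congr 1
          funext x
          exact hz x
      _ = 0 := integral_zero _ _
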